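/- Let a = (a_1, …, a_d) be a probability vector with all a_i > 0, let Y : {1, …, d} → ℝ be a function that is not constant, let φ(t) = log( ∑_{i=1}^d a_i e^{t·Y(i)} ), let μ = ∑_{i=1}^d a_i Y(i), and let y_max = max_i Y(i). Then for every x with μ ≤ x < y_max, lim_{n→∞} −(1/n) · log( ∑_{ω ∈ {1,…,d}^n : ∑_{j=1}^n Y(ω_j) ≥ n·x} ∏_{j=1}^n a_{ω_j} ) = sup_{t ≥ 0} ( t·x − φ(t) ). -/

import Mathlib

open Finset

lemma sum_prod_pow {d n : ℕ} (c : Fin d → ℝ) :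
    ∑ ω : Fin n → Fin d, ∏ j, c (ω j) = (∑ i, c i) ^ n :=
  (Fintype.sum_pow c n).symm

lemma chernoff_ge {d : ℕ} (n : ℕ) (p : Fin d → ℝ) (hp : ∀ i, 0 ≤ p i)
    (Y : Fin d → ℝ) (t : ℝ) (ht : 0 ≤ t) (c : ℝ) :
    (∑ ω : Fin n → Fin d, if c ≤ ∑ j, Y (ω j) then ∏ j, p (ω j) else 0)
      ≤ Real.exp (-t * c) * (∑ i, p i * Real.exp (t * Y i)) ^ n := by
  rw [← sum_prod_pow, Finset.mul_sum]
  apply Finset.sum_le_sum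
  intro ω _
  have hprod : ∏ j, p (ω j) * Real.exp (t * Y (ω j))
      = (∏ j, p (ω j)) * Real.exp (t * ∑ j, Y (ω j)) := by
    rw [Finset.prod_mul_distrib, ← Real.exp_sum, Finset.mul_sum]
  rw [hprod]
  by_cases h : c ≤ ∑ j, Y (ω j)
  · rw [if_pos h]
    have h1 : (1:ℝ) ≤ Real.exp (-t * c) * Real.exp (t * ∑ j, Y (ω j)) := by
      rw [← Real.exp_add]
      have : 0 ≤ -t * c + t * ∑ j, Y (ω j) := by nlinarith
      calc (1:ℝ) = Real.exp 0 := by simp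
        _ ≤ _ := Real.exp_le_exp.2 this
    have hprodnn : 0 ≤ ∏ j, p (ω j) := Finset.prod_nonneg fun j _ => hp (ω j)
    nlinarith
  · rw [if_neg h]
    have hprodnn : 0 ≤ ∏ j, p (ω j) := Finset.prod_nonneg fun j _ => hp (ω j)
    positivity

lemma exists_pos_lt_one {g : ℝ → ℝ} {v : ℝ} (hg : HasDerivAt g v 0) (hv : v < 0)
    (h0 : g 0 = 1) : ∃ s : ℝ, 0 < s ∧ g s < 1 := by
  have hsl : Filter.Tendsto (slope g 0) (nhdsWithin 0 (Set.Ioi 0)) (nhds v) := by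
    have := (hg.hasDerivWithinAt (s := Set.Ioi 0))
    rw [hasDerivWithinAt_iff_tendsto_slope] at this
    simpa [Set.diff_singleton_eq_self (fun h => lt_irrefl (0:ℝ) h)] using this
  have hev : ∀ᶠ s in nhdsWithin 0 (Set.Ioi 0), slope g 0 s < 0 :=
    hsl.eventually (eventually_lt_nhds hv)
  have hmem : ∀ᶠ s in nhdsWithin 0 (Set.Ioi 0), s ∈ Set.Ioi (0:ℝ) :=
    self_mem_nhdsWithin
  obtain ⟨s, hs1, hs2⟩ := (hev.and hmem).exists
  refine ⟨s, hs2, ?_⟩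
  have hs : (0:ℝ) < s := hs2
  rw [slope_def_field] at hs1
  have : (g s - g 0) / (s - 0) < 0 := hs1
  rw [h0] at this
  have := (div_neg_iff).1 (by simpa using this)
  rcases this with ⟨h1, h2⟩ | ⟨h1, h2⟩
  · linarith
  · linarith


lemma tail_bound {d : ℕ} (p : Fin d → ℝ) (hp : ∀ i, 0 ≤ p i) (hps : ∑ i, p i = 1)
    (Y : Fin d → ℝ) (c : ℝ) (hc : ∑ i, p i * Y i < c) :
    ∃ ρ : ℝ, 0 ≤ ρ ∧ ρ < 1 ∧ ∀ n : ℕ,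
      (∑ ω : Fin n → Fin d, if (n : ℝ) * c ≤ ∑ j, Y (ω j) then ∏ j, p (ω j) else 0)
        ≤ ρ ^ n := by
  set g : ℝ → ℝ := fun s => Real.exp (-s * c) * ∑ i, p i * Real.exp (s * Y i) with hg
  have hg0 : g 0 = 1 := by simp [hg, hps]
  have hder : HasDerivAt g (-c + ∑ i, p i * Y i) 0 := by
    have h1 : HasDerivAt (fun s : ℝ => Real.exp (-s * c)) (-c) 0 := by
      have : HasDerivAt (fun s : ℝ => -s * c) (-c) 0 := by
        simpa using (hasDerivAt_id (0:ℝ)).neg.mul_const c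
      simpa using this.exp
    have h2 : HasDerivAt (fun s : ℝ => ∑ i, p i * Real.exp (s * Y i))
        (∑ i, p i * Y i) 0 := by
      have := HasDerivAt.fun_sum (u := Finset.univ)
        (A := fun i (s : ℝ) => p i * Real.exp (s * Y i))
        (A' := fun i => p i * Y i) (x := (0:ℝ)) (fun i _ => by
          have : HasDerivAt (fun s : ℝ => s * Y i) (Y i) 0 := hasDerivAt_mul_const (Y i)
          simpa [mul_comm] using (this.exp.const_mul (p i)))
      simpa using this
    have := h1.fun_mul h2
    simpa [hg, hps, neg_mul] using this
  obtain ⟨s, hs, hgs⟩ := exists_pos_lt_one hder (by linarith) hg0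
  set ρ := g s with hρ
  have hρ0 : 0 ≤ ρ := by
    have : 0 ≤ ∑ i, p i * Real.exp (s * Y i) :=
      Finset.sum_nonneg fun i _ => mul_nonneg (hp i) (Real.exp_pos _).le
    exact mul_nonneg (Real.exp_pos _).le this
  refine ⟨ρ, hρ0, hgs, fun n => ?_⟩
  calc (∑ ω : Fin n → Fin d, if (n : ℝ) * c ≤ ∑ j, Y (ω j) then ∏ j, p (ω j) else 0)
      ≤ Real.exp (-s * ((n:ℝ) * c)) * (∑ i, p i * Real.exp (s * Y i)) ^ n :=
        chernoff_ge n p hp Y s hs.le ((n:ℝ) * c)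
    _ = ρ ^ n := by
        rw [hρ, hg, mul_pow, ← Real.exp_nat_mul]
        ring_nf

lemma exists_tilt {d : ℕ} (a : Fin d → ℝ) (ha : ∀ i, 0 < a i) (hsum : ∑ i, a i = 1)
    (Y : Fin d → ℝ) (ymax : ℝ) (hymax : IsGreatest (Set.range Y) ymax)
    (x : ℝ) (hx1 : ∑ i, a i * Y i ≤ x) (hx2 : x < ymax) (ε : ℝ) (hε : 0 < ε) :
    ∃ t' : ℝ, 0 ≤ t' ∧
      x < (∑ i, a i * Y i * Real.exp (t' * Y i)) / (∑ i, a i * Real.exp (t' * Y i)) ∧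
      t' * ((∑ i, a i * Y i * Real.exp (t' * Y i)) / (∑ i, a i * Real.exp (t' * Y i)) - x)
        < ε := by
  obtain ⟨im, him⟩ := hymax.1
  have hd : 0 < d := Fin.pos im
  set M : ℝ → ℝ := fun t => ∑ i, a i * Real.exp (t * Y i) with hM
  set N : ℝ → ℝ := fun t => ∑ i, a i * Y i * Real.exp (t * Y i) with hN
  have hMpos : ∀ t, 0 < M t := fun t =>
    Finset.sum_pos (fun i _ => mul_pos (ha i) (Real.exp_pos _)) ⟨im, Finset.mem_univ im⟩
  have hMc : Continuous M := by
    apply continuous_finset_sum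
    intro i _
    exact continuous_const.mul (Real.continuous_exp.comp (continuous_id.mul continuous_const))
  have hNc : Continuous N := by
    apply continuous_finset_sum
    intro i _
    exact continuous_const.mul (Real.continuous_exp.comp (continuous_id.mul continuous_const))
  set m : ℝ → ℝ := fun t => N t / M t with hm
  have hmc : Continuous m := hNc.div hMc fun t => (hMpos t).ne'
  have hm0 : m 0 ≤ x := by
    have : m 0 = ∑ i, a i * Y i := by simp [hm, hN, hM, hsum]
    rw [this]; exact hx1
  -- existence of t0 with x < m t0
  have hmgt : ∀ t, x * M t < N t → x < m t := by
    intro t h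
    rw [hm, lt_div_iff₀ (hMpos t)]
    linarith [h]
  have hYle : ∀ i, Y i ≤ ymax := fun i => hymax.2 ⟨i, rfl⟩
  obtain ⟨t0, ht00, ht0⟩ : ∃ t0 : ℝ, 0 ≤ t0 ∧ x < m t0 := by
    set G : ℝ → ℝ := fun t => ∑ i, a i * (Y i - x) * Real.exp (t * (Y i - ymax)) with hG
    set L : ℝ := ∑ i, if Y i = ymax then a i * (ymax - x) else 0 with hL
    have hLpos : 0 < L := by
      rw [hL]
      apply Finset.sum_pos'
      · intro i _
        split
        · exact mul_nonneg (ha i).le (by linarith)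
        · exact le_refl 0
      · exact ⟨im, Finset.mem_univ im, by rw [if_pos him]; exact mul_pos (ha im) (by linarith)⟩
    have hGt : Filter.Tendsto G Filter.atTop (nhds L) := by
      rw [hG, hL]
      apply tendsto_finset_sum
      intro i _
      by_cases h : Y i = ymax
      · simp only [h, if_pos, sub_self, mul_zero, Real.exp_zero, mul_one]
        exact tendsto_const_nhds
      · rw [if_neg h]
        have hlt : Y i - ymax < 0 := by have := lt_of_le_of_ne (hYle i) h; linarith
        have h1 : Filter.Tendsto (fun t : ℝ => t * (Y i - ymax)) Filter.atTop Filter.atBot :=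
          (Filter.tendsto_mul_const_atBot_of_neg hlt).2 Filter.tendsto_id
        have h2 : Filter.Tendsto (fun t : ℝ => Real.exp (t * (Y i - ymax)))
            Filter.atTop (nhds 0) := Real.tendsto_exp_atBot.comp h1
        simpa using h2.const_mul (a i * (Y i - x))
    have hev : ∀ᶠ t in Filter.atTop, 0 < G t :=
      hGt.eventually (eventually_gt_nhds hLpos)
    obtain ⟨t0, ht01, ht02⟩ := (hev.and (Filter.eventually_ge_atTop (0:ℝ))).exists
    refine ⟨t0, ht02, hmgt t0 ?_⟩
    have key : N t0 - x * M t0 = Real.exp (t0 * ymax) * G t0 := by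
      simp only [hN, hM, hG, Finset.mul_sum, ← Finset.sum_sub_distrib]
      apply Finset.sum_congr rfl
      intro i _
      have he : Real.exp (t0 * ymax) * Real.exp (t0 * (Y i - ymax)) = Real.exp (t0 * Y i) := by
        rw [← Real.exp_add]; ring_nf
      calc a i * Y i * Real.exp (t0 * Y i) - x * (a i * Real.exp (t0 * Y i))
          = a i * (Y i - x) * Real.exp (t0 * Y i) := by ring
        _ = Real.exp (t0 * ymax) * (a i * (Y i - x) * Real.exp (t0 * (Y i - ymax))) := by
            rw [← he]; ring
    nlinarith [mul_pos (Real.exp_pos (t0 * ymax)) ht01, Real.exp_pos (t0 * ymax)]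
  -- define t* as sup of K
  set K : Set ℝ := Set.Icc 0 t0 ∩ m ⁻¹' (Set.Iic x) with hK
  have hKc : IsClosed K := isClosed_Icc.inter (isClosed_Iic.preimage hmc)
  have hKne : K.Nonempty := ⟨0, ⟨le_refl 0, ht00⟩, hm0⟩
  have hKbdd : BddAbove K := ⟨t0, fun y hy => hy.1.2⟩
  set ts : ℝ := sSup K with hts
  have htsK : ts ∈ K := hKc.csSup_mem hKne hKbdd
  have hts0 : 0 ≤ ts := htsK.1.1
  have htst0 : ts < t0 := lt_of_le_of_ne htsK.1.2 (by
    intro h; rw [h] at htsK; exact absurd htsK.2 (not_le.2 ht0))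
  -- continuity of ψ at ts
  set ψ : ℝ → ℝ := fun t => t * (m t - x) with hψ
  have hψc : Continuous ψ := continuous_id.mul (hmc.sub continuous_const)
  have hψts : ψ ts ≤ 0 := mul_nonpos_of_nonneg_of_nonpos hts0 (by
    have := htsK.2; simp only [Set.mem_preimage, Set.mem_Iic] at this; linarith)
  have : ∀ᶠ t in nhds ts, ψ t < ε := hψc.continuousAt.eventually_lt
    (continuous_const.continuousAt) (by linarith)
  obtain ⟨r, hr, hball⟩ := Metric.eventually_nhds_iff.1 this
  set t' : ℝ := min t0 (ts + r / 2) with ht'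
  have ht'1 : ts < t' := lt_min htst0 (by linarith)
  have ht'2 : t' ≤ t0 := min_le_left _ _
  have ht'0 : 0 ≤ t' := le_trans hts0 ht'1.le
  have hψt' : ψ t' < ε := by
    apply hball
    rw [Real.dist_eq, abs_lt]
    constructor
    · have : ts + r / 2 ≥ t' := min_le_right _ _
      linarith
    · have : ts + r / 2 ≥ t' := min_le_right _ _
      linarith
  have hxm : x < m t' := by
    by_contra h
    push_neg at h
    have : t' ∈ K := ⟨⟨ht'0, ht'2⟩, h⟩
    have : t' ≤ ts := le_csSup hKbdd this
    linarith
  exact ⟨t', ht'0, hxm, hψt'⟩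

set_option maxHeartbeats 2000000 in
theorem stmt_17 {d : ℕ} (a : Fin d → ℝ) (ha : ∀ i, 0 < a i) (hsum : ∑ i, a i = 1)
    (Y : Fin d → ℝ) (hY : ¬ ∀ i j : Fin d, Y i = Y j)
    (ymax : ℝ) (hymax : IsGreatest (Set.range Y) ymax)
    (x : ℝ) (hx1 : ∑ i, a i * Y i ≤ x) (hx2 : x < ymax) :
    Filter.Tendsto
      (fun n : ℕ => -(1 / (n : ℝ)) * Real.log
        (∑ ω : Fin n → Fin d,
          if (n : ℝ) * x ≤ ∑ j, Y (ω j) then ∏ j, a (ω j) else 0))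
      Filter.atTop
      (nhds (sSup {y : ℝ | ∃ t : ℝ, 0 ≤ t ∧
        y = t * x - Real.log (∑ i, a i * Real.exp (t * Y i))})) := by
  obtain ⟨im, him⟩ := hymax.1
  set M : ℝ → ℝ := fun t => ∑ i, a i * Real.exp (t * Y i) with hMdef
  have hMpos : ∀ t, 0 < M t := fun t =>
    Finset.sum_pos (fun i _ => mul_pos (ha i) (Real.exp_pos _)) ⟨im, Finset.mem_univ im⟩
  set S : Set ℝ := {y : ℝ | ∃ t : ℝ, 0 ≤ t ∧ y = t * x - Real.log (M t)} with hSdef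
  have hSne : (0:ℝ) ∈ S := ⟨0, le_refl 0, by simp [hMdef, hsum]⟩
  have hSbdd : BddAbove S := by
    refine ⟨-Real.log (a im), fun y hy => ?_⟩
    obtain ⟨t, ht, rfl⟩ := hy
    have h1 : a im * Real.exp (t * ymax) ≤ M t := by
      rw [← him]
      show a im * Real.exp (t * Y im) ≤ ∑ i, a i * Real.exp (t * Y i)
      exact Finset.single_le_sum (f := fun i => a i * Real.exp (t * Y i))
        (fun i _ => (mul_pos (ha i) (Real.exp_pos _)).le) (Finset.mem_univ im)
    have h2 : Real.log (a im * Real.exp (t * ymax)) ≤ Real.log (M t) :=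
      Real.log_le_log (mul_pos (ha im) (Real.exp_pos _)) h1
    rw [Real.log_mul (ha im).ne' (Real.exp_pos _).ne', Real.log_exp] at h2
    nlinarith [mul_nonneg ht (sub_nonneg.2 hx2.le)]
  set Z : ℕ → ℝ := fun n => ∑ ω : Fin n → Fin d,
      if (n : ℝ) * x ≤ ∑ j, Y (ω j) then ∏ j, a (ω j) else 0 with hZdef
  have hZnn : ∀ n (ω : Fin n → Fin d),
      0 ≤ (if (n : ℝ) * x ≤ ∑ j, Y (ω j) then ∏ j, a (ω j) else 0) := by
    intro n ω
    split
    · exact Finset.prod_nonneg fun j _ => (ha _).le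
    · exact le_refl 0
  have hZpos : ∀ n, 0 < Z n := by
    intro n
    have hcond : (n : ℝ) * x ≤ ∑ j : Fin n, Y ((fun _ => im) j) := by
      simp only [him, Finset.sum_const, Finset.card_univ, Fintype.card_fin, nsmul_eq_mul]
      exact mul_le_mul_of_nonneg_left hx2.le (Nat.cast_nonneg n)
    have hterm : (0:ℝ) < (if (n : ℝ) * x ≤ ∑ j : Fin n, Y ((fun _ => im) j)
        then ∏ j : Fin n, a ((fun _ => im) j) else 0) := by
      rw [if_pos hcond]
      exact Finset.prod_pos fun j _ => ha im
    calc (0:ℝ) < _ := hterm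
      _ ≤ Z n := Finset.single_le_sum (fun ω _ => hZnn n ω) (Finset.mem_univ _)
  -- lower bound for u n
  have hlow : ∀ t : ℝ, 0 ≤ t → ∀ n : ℕ, 1 ≤ n →
      t * x - Real.log (M t) ≤ -(1 / (n : ℝ)) * Real.log (Z n) := by
    intro t ht n hn
    have hch := chernoff_ge n a (fun i => (ha i).le) Y t ht ((n : ℝ) * x)
    have h1 : Real.log (Z n) ≤ -t * ((n:ℝ) * x) + (n:ℝ) * Real.log (M t) := by
      calc Real.log (Z n) ≤ Real.log (Real.exp (-t * ((n:ℝ) * x)) * (M t) ^ n) :=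
            Real.log_le_log (hZpos n) hch
        _ = -t * ((n:ℝ) * x) + (n:ℝ) * Real.log (M t) := by
            rw [Real.log_mul (Real.exp_pos _).ne' (pow_pos (hMpos t) n).ne',
              Real.log_exp, Real.log_pow]
    have hn0 : (0:ℝ) < (n:ℝ) := by exact_mod_cast hn
    have h2 := mul_le_mul_of_nonneg_left h1 (by positivity : (0:ℝ) ≤ 1 / (n:ℝ))
    have h3 : (1 / (n:ℝ)) * (-t * ((n:ℝ) * x) + (n:ℝ) * Real.log (M t))
        = -(t * x) + Real.log (M t) := by
      field_simp
    rw [h3] at h2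
    linarith
  have hIle : ∀ n : ℕ, 1 ≤ n → sSup S ≤ -(1 / (n : ℝ)) * Real.log (Z n) := by
    intro n hn
    apply csSup_le ⟨0, hSne⟩
    rintro y ⟨t, ht, rfl⟩
    exact hlow t ht n hn
  rw [tendsto_order]
  constructor
  · intro b hb
    filter_upwards [Filter.eventually_ge_atTop 1] with n hn
    exact lt_of_lt_of_le hb (hIle n hn)
  · intro b hb
    set η : ℝ := b - sSup S with hη
    have hηpos : 0 < η := by simp [hη]; linarith
    obtain ⟨t', ht'0, hx', hψ⟩ := exists_tilt a ha hsum Y ymax hymax x hx1 hx2 (η/4)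
      (by linarith)
    set Mt : ℝ := ∑ i, a i * Real.exp (t' * Y i) with hMt
    have hMtpos : 0 < Mt := hMpos t'
    set x' : ℝ := (∑ i, a i * Y i * Real.exp (t' * Y i)) / Mt with hx'def
    set p' : Fin d → ℝ := fun i => a i * Real.exp (t' * Y i) / Mt with hp'
    have hp'pos : ∀ i, 0 < p' i := fun i =>
      div_pos (mul_pos (ha i) (Real.exp_pos _)) hMtpos
    have hp'sum : ∑ i, p' i = 1 := by
      rw [hp', ← Finset.sum_div, ← hMt, div_self hMtpos.ne']
    have hp'mean : ∑ i, p' i * Y i = x' := by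
      rw [hx'def, Finset.sum_div]
      apply Finset.sum_congr rfl
      intro i _
      rw [hp']
      ring
    set δ : ℝ := η / (4 * (t' + 1)) with hδ
    have hδpos : 0 < δ := by positivity
    set x'' : ℝ := x' + δ with hx''
    have ht'δ : t' * δ < η / 4 := by
      rw [hδ]
      have h1 : t' * (η / (4 * (t' + 1))) = (t' / (t' + 1)) * (η / 4) := by
        rw [mul_div_assoc', div_mul_div_comm, mul_comm (t' + 1) 4]
      rw [h1]
      have h4 : t' / (t' + 1) < 1 := by
        rw [div_lt_one (by linarith)]
        linarith
      nlinarith [div_nonneg ht'0 (by linarith : (0:ℝ) ≤ t' + 1)]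
    -- two tail bounds under p'
    obtain ⟨ρ2, hρ2nn, hρ2lt, hρ2⟩ := tail_bound p' (fun i => (hp'pos i).le) hp'sum Y x''
      (by rw [hp'mean]; linarith)
    obtain ⟨ρ1, hρ1nn, hρ1lt, hρ1⟩ := tail_bound p' (fun i => (hp'pos i).le) hp'sum
      (fun i => -Y i) (-x)
      (by
        have : ∑ i, p' i * -Y i = -∑ i, p' i * Y i := by
          rw [← Finset.sum_neg_distrib]; apply Finset.sum_congr rfl; intros; ring
        rw [this, hp'mean]; linarith)
    -- rewrite lower-tail event
    have hρ1' : ∀ n : ℕ,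
        (∑ ω : Fin n → Fin d, if (∑ j, Y (ω j)) ≤ (n:ℝ) * x then ∏ j, p' (ω j) else 0)
          ≤ ρ1 ^ n := by
      intro n
      have heq : ∀ ω : Fin n → Fin d,
          (if (∑ j, Y (ω j)) ≤ (n:ℝ) * x then ∏ j, p' (ω j) else 0)
            = (if (n:ℝ) * -x ≤ ∑ j, -Y (ω j) then ∏ j, p' (ω j) else 0) := by
        intro ω
        apply if_congr _ rfl rfl
        have hs : ∑ j, -Y (ω j) = -∑ j, Y (ω j) := by
          rw [Finset.sum_neg_distrib]
        rw [hs, mul_neg, neg_le_neg_iff]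
      rw [Finset.sum_congr rfl (fun ω _ => heq ω)]
      exact hρ1 n
    have hp'nn : ∀ n (ω : Fin n → Fin d), 0 ≤ ∏ j, p' (ω j) :=
      fun n ω => Finset.prod_nonneg fun j _ => (hp'pos (ω j)).le
    have hWg : ∀ n : ℕ, 1 - ρ1 ^ n - ρ2 ^ n ≤
        ∑ ω : Fin n → Fin d, if ((n:ℝ) * x < ∑ j, Y (ω j) ∧ ∑ j, Y (ω j) < (n:ℝ) * x'')
          then ∏ j, p' (ω j) else 0 := by
      intro n
      have htot : ∑ ω : Fin n → Fin d, ∏ j, p' (ω j) = 1 := by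
        rw [sum_prod_pow, hp'sum, one_pow]
      have hpt : ∀ ω : Fin n → Fin d, ∏ j, p' (ω j) ≤
          (if ((n:ℝ) * x < ∑ j, Y (ω j) ∧ ∑ j, Y (ω j) < (n:ℝ) * x'')
            then ∏ j, p' (ω j) else 0)
          + ((if (∑ j, Y (ω j)) ≤ (n:ℝ) * x then ∏ j, p' (ω j) else 0)
          + (if (n:ℝ) * x'' ≤ ∑ j, Y (ω j) then ∏ j, p' (ω j) else 0)) := by
        intro ω
        have hwnn : 0 ≤ ∏ j, p' (ω j) := hp'nn n ω
        have i1 : 0 ≤ (if ((n:ℝ) * x < ∑ j, Y (ω j) ∧ ∑ j, Y (ω j) < (n:ℝ) * x'')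
            then ∏ j, p' (ω j) else 0) := by
          split
          · exact hwnn
          · exact le_refl 0
        have i2 : 0 ≤ (if (∑ j, Y (ω j)) ≤ (n:ℝ) * x then ∏ j, p' (ω j) else 0) := by
          split
          · exact hwnn
          · exact le_refl 0
        have i3 : 0 ≤ (if (n:ℝ) * x'' ≤ ∑ j, Y (ω j) then ∏ j, p' (ω j) else 0) := by
          split
          · exact hwnn
          · exact le_refl 0
        by_cases h1 : (n:ℝ) * x < ∑ j, Y (ω j)
        · by_cases h2 : ∑ j, Y (ω j) < (n:ℝ) * x''
          · have e1 : (if ((n:ℝ) * x < ∑ j, Y (ω j) ∧ ∑ j, Y (ω j) < (n:ℝ) * x'')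
                then ∏ j, p' (ω j) else 0) = ∏ j, p' (ω j) := if_pos ⟨h1, h2⟩
            linarith
          · have e3 : (if (n:ℝ) * x'' ≤ ∑ j, Y (ω j) then ∏ j, p' (ω j) else 0)
                = ∏ j, p' (ω j) := if_pos (not_lt.1 h2)
            linarith
        · have e2 : (if (∑ j, Y (ω j)) ≤ (n:ℝ) * x then ∏ j, p' (ω j) else 0)
              = ∏ j, p' (ω j) := if_pos (not_lt.1 h1)
          linarith
      have hsum_le := Finset.sum_le_sum (fun ω (_ : ω ∈ Finset.univ) => hpt ω)
      rw [htot, Finset.sum_add_distrib, Finset.sum_add_distrib] at hsum_le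
      have hb1 := hρ1' n
      have hb2 := hρ2 n
      linarith
    have hai : ∀ i, Mt * p' i * Real.exp (-t' * Y i) = a i := by
      intro i
      have hexp : Real.exp (t' * Y i) ≠ 0 := Real.exp_ne_zero _
      rw [hp', neg_mul, Real.exp_neg]
      field_simp
    have hZge : ∀ n : ℕ,
        Mt ^ n * Real.exp (-t' * ((n:ℝ) * x'')) * (1 - ρ1 ^ n - ρ2 ^ n) ≤ Z n := by
      intro n
      have hCpos : 0 < Mt ^ n * Real.exp (-t' * ((n:ℝ) * x'')) :=
        mul_pos (pow_pos hMtpos n) (Real.exp_pos _)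
      have step1 : ∀ ω : Fin n → Fin d,
          Mt ^ n * Real.exp (-t' * ((n:ℝ) * x''))
            * (if ((n:ℝ) * x < ∑ j, Y (ω j) ∧ ∑ j, Y (ω j) < (n:ℝ) * x'')
              then ∏ j, p' (ω j) else 0)
          ≤ (if (n:ℝ) * x ≤ ∑ j, Y (ω j) then ∏ j, a (ω j) else 0) := by
        intro ω
        by_cases hgood : ((n:ℝ) * x < ∑ j, Y (ω j) ∧ ∑ j, Y (ω j) < (n:ℝ) * x'')
        · rw [if_pos hgood, if_pos hgood.1.le]
          have hfact : ∏ j, a (ω j)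
              = Mt ^ n * ((∏ j, p' (ω j)) * Real.exp (-t' * ∑ j, Y (ω j))) := by
            calc ∏ j, a (ω j)
                = ∏ j, (Mt * p' (ω j) * Real.exp (-t' * Y (ω j))) :=
                  Finset.prod_congr rfl (fun j _ => (hai (ω j)).symm)
              _ = ((∏ _j : Fin n, Mt) * ∏ j, p' (ω j)) * ∏ j, Real.exp (-t' * Y (ω j)) := by
                  rw [Finset.prod_mul_distrib, Finset.prod_mul_distrib]
              _ = Mt ^ n * ((∏ j, p' (ω j)) * Real.exp (-t' * ∑ j, Y (ω j))) := by
                  rw [Finset.prod_const, Finset.card_univ, Fintype.card_fin,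
                    ← Real.exp_sum, ← Finset.mul_sum]
                  ring
          rw [hfact]
          have hs : Real.exp (-t' * ((n:ℝ) * x'')) ≤ Real.exp (-t' * ∑ j, Y (ω j)) := by
            apply Real.exp_le_exp.2
            nlinarith [mul_le_mul_of_nonneg_left hgood.2.le ht'0]
          have hwnn : 0 ≤ ∏ j, p' (ω j) := hp'nn n ω
          calc Mt ^ n * Real.exp (-t' * ((n:ℝ) * x'')) * ∏ j, p' (ω j)
              ≤ Mt ^ n * Real.exp (-t' * ∑ j, Y (ω j)) * ∏ j, p' (ω j) := by
                apply mul_le_mul_of_nonneg_right _ hwnn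
                exact mul_le_mul_of_nonneg_left hs (pow_pos hMtpos n).le
            _ = Mt ^ n * ((∏ j, p' (ω j)) * Real.exp (-t' * ∑ j, Y (ω j))) := by ring
        · rw [if_neg hgood, mul_zero]
          exact hZnn n ω
      calc Mt ^ n * Real.exp (-t' * ((n:ℝ) * x'')) * (1 - ρ1 ^ n - ρ2 ^ n)
          ≤ Mt ^ n * Real.exp (-t' * ((n:ℝ) * x''))
            * ∑ ω : Fin n → Fin d, (if ((n:ℝ) * x < ∑ j, Y (ω j) ∧ ∑ j, Y (ω j) < (n:ℝ) * x'')
              then ∏ j, p' (ω j) else 0) :=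
            mul_le_mul_of_nonneg_left (hWg n) hCpos.le
        _ = ∑ ω : Fin n → Fin d, Mt ^ n * Real.exp (-t' * ((n:ℝ) * x''))
              * (if ((n:ℝ) * x < ∑ j, Y (ω j) ∧ ∑ j, Y (ω j) < (n:ℝ) * x'')
                then ∏ j, p' (ω j) else 0) := Finset.mul_sum _ _ _
        _ ≤ ∑ ω : Fin n → Fin d, (if (n:ℝ) * x ≤ ∑ j, Y (ω j) then ∏ j, a (ω j) else 0) :=
            Finset.sum_le_sum (fun ω _ => step1 ω)
        _ = Z n := rfl
    have htendρ : Filter.Tendsto (fun n : ℕ => ρ1 ^ n + ρ2 ^ n) Filter.atTop (nhds 0) := by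
      have h1 := tendsto_pow_atTop_nhds_zero_of_lt_one hρ1nn hρ1lt
      have h2 := tendsto_pow_atTop_nhds_zero_of_lt_one hρ2nn hρ2lt
      simpa using h1.add h2
    have hev1 : ∀ᶠ n : ℕ in Filter.atTop, ρ1 ^ n + ρ2 ^ n ≤ 1/2 :=
      htendρ.eventually (eventually_le_nhds (by norm_num))
    have hev2 : ∀ᶠ n : ℕ in Filter.atTop, Real.log 2 / (n:ℝ) < η / 4 :=
      (tendsto_const_div_atTop_nhds_zero_nat (Real.log 2)).eventually
        (eventually_lt_nhds (by linarith))
    filter_upwards [hev1, hev2, Filter.eventually_ge_atTop 1] with n h12 hlogn hn1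
    have hn0 : (0:ℝ) < (n:ℝ) := by exact_mod_cast hn1
    have hZn : Mt ^ n * Real.exp (-t' * ((n:ℝ) * x'')) * (1/2) ≤ Z n := by
      have h := hZge n
      have hC : 0 < Mt ^ n * Real.exp (-t' * ((n:ℝ) * x'')) :=
        mul_pos (pow_pos hMtpos n) (Real.exp_pos _)
      nlinarith
    have hlogZ : (n:ℝ) * Real.log Mt + (-t' * ((n:ℝ) * x'')) - Real.log 2
        ≤ Real.log (Z n) := by
      have h := Real.log_le_log (by positivity) hZn
      rw [Real.log_mul (by positivity) (by norm_num),
        Real.log_mul (pow_ne_zero n hMtpos.ne') (Real.exp_ne_zero _),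
        Real.log_pow, Real.log_exp, one_div, Real.log_inv] at h
      push_cast at h ⊢
      linarith
    have hfin : -(1/(n:ℝ)) * Real.log (Z n)
        ≤ t' * x'' - Real.log Mt + Real.log 2 / (n:ℝ) := by
      have hnz : (n:ℝ) ≠ 0 := hn0.ne'
      have key : -Real.log (Z n)
          ≤ (n:ℝ) * (t' * x'' - Real.log Mt + Real.log 2 / (n:ℝ)) := by
        have e2 : (n:ℝ) * (Real.log 2 / (n:ℝ)) = Real.log 2 := mul_div_cancel₀ _ hnz
        rw [mul_add, mul_sub, e2]
        linarith [hlogZ]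
      have h5 := mul_le_mul_of_nonneg_left key (by positivity : (0:ℝ) ≤ 1/(n:ℝ))
      rw [one_div, inv_mul_cancel_left₀ hnz] at h5
      rw [one_div]
      linarith
    have hin : t' * x - Real.log Mt ≤ sSup S := le_csSup hSbdd ⟨t', ht'0, rfl⟩
    have hsplit : t' * x'' - Real.log Mt
        = (t' * x - Real.log Mt) + t' * (x' - x) + t' * δ := by
      rw [hx'']
      ring
    have : -(1/(n:ℝ)) * Real.log (Z n) < b := by
      rw [hη] at hψ ht'δ hlogn
      linarith
    exact this
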